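/- arXiv:1509.02178 — 5 statements merged into one kernel-verified Lean document; each statement's English description precedes it below -/
import Mathlib

section
/- Let κ : [0,L] → ℝ be continuous and let 𝔰_κ : [0,L] → ℝ be the unique solution of v'' + κv = 0 with v(0) = 0 and v'(0) = 1. Let κ' : [0,L] → ℝ be continuous with κ' ≥ κ on [0,L], and suppose 𝔰_{κ'} > 0 on (0,L]. Then 𝔰_κ ≥ 𝔰_{κ'} on [0,L]. -/
open Set

/-- `s` is the generalized sin-function for curvature `κ` on `[0, L]`:
the solution of `v'' + κ v = 0` with `v 0 = 0`, `v' 0 = 1`, with `s'` its derivative. -/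
def IsSinSolution (κ s s' : ℝ → ℝ) (L : ℝ) : Prop :=
  s 0 = 0 ∧ s' 0 = 1 ∧
    ∀ x ∈ Set.Icc (0:ℝ) L, HasDerivAt s (s' x) x ∧ HasDerivAt s' (-(κ x * s x)) x

/-!
The Wronskian `W = s t' - s' t` vanishes at `0` and has derivative `(κ - κ') s t`, so `W ≤ 0` on
any initial interval where `s ≥ 0`. There `(s / t)' = -W / t² ≥ 0`, and `s / t → s'(0) / t'(0) = 1`
at `0⁺`, hence `s ≥ t` there. In particular, if `s ≥ 0` on `[0, c]` with `c > 0`, then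
`s c ≥ t c > 0`, so `s` stays nonnegative a little beyond `c` (and beyond `0`, as `s'(0) = 1`);
continuous induction gives `s ≥ 0`, and then `s ≥ t`, on all of `[0, L]`.
-/

open Filter Topology

def wronskian (f f' g g' : ℝ → ℝ) (x : ℝ) : ℝ :=
  f x * g' x - f' x * g x

theorem tendsto_div_of_hasDerivAt_of_eq_zero {f g : ℝ → ℝ} {a b x : ℝ}
    (hf : HasDerivAt f a x) (hg : HasDerivAt g b x) (hfx : f x = 0) (hgx : g x = 0)
    (hb : b ≠ 0) : Tendsto (fun y => f y / g y) (𝓝[≠] x) (𝓝 (a / b)) := by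
  refine (hf.tendsto_slope.div hg.tendsto_slope hb).congr' ?_
  filter_upwards [self_mem_nhdsWithin] with y hy
  simp only [Pi.div_apply, slope_def_field, hfx, hgx, sub_zero]
  exact div_div_div_cancel_right₀ (sub_ne_zero.mpr hy) _ _

theorem HasDerivAt.eventually_pos_nhdsGT {f : ℝ → ℝ} {a x : ℝ} (hf : HasDerivAt f a x)
    (hfx : f x = 0) (ha : 0 < a) : ∀ᶠ y in 𝓝[>] x, 0 < f y := by
  filter_upwards [(hf.tendsto_slope.mono_left (nhdsGT_le_nhdsNE x)).eventually_const_lt ha,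
    self_mem_nhdsWithin] with y hslope hy
  rwa [slope_def_field, hfx, sub_zero, div_pos_iff_of_pos_right (sub_pos.mpr hy)] at hslope

theorem monotoneOn_div_of_wronskian_nonpos {f f' g g' : ℝ → ℝ} {a b : ℝ}
    (hf : ContinuousOn f (Ioc a b)) (hg : ContinuousOn g (Ioc a b))
    (hf' : ∀ x ∈ Ioo a b, HasDerivAt f (f' x) x) (hg' : ∀ x ∈ Ioo a b, HasDerivAt g (g' x) x)
    (hg_pos : ∀ x ∈ Ioc a b, 0 < g x) (hW : ∀ x ∈ Ioo a b, wronskian f f' g g' x ≤ 0) :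
    MonotoneOn (fun x => f x / g x) (Ioc a b) := by
  refine monotoneOn_of_hasDerivWithinAt_nonneg (convex_Ioc a b)
    (f' := fun x => (f' x * g x - f x * g' x) / g x ^ 2)
    (hf.div hg fun x hx => (hg_pos x hx).ne') (fun x hx => ?_) (fun x hx => ?_)
  · rw [interior_Ioc] at hx
    exact ((hf' x hx).div (hg' x hx) (hg_pos x (Ioo_subset_Ioc_self hx)).ne').hasDerivWithinAt
  · rw [interior_Ioc] at hx
    have hnum : 0 ≤ f' x * g x - f x * g' x := by
      have := hW x hx
      unfold wronskian at this
      linarith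
    exact div_nonneg hnum (sq_nonneg _)

namespace IsSinSolution

variable {κ κ' s s' t t' : ℝ → ℝ} {L : ℝ}

theorem continuousOn (hs : IsSinSolution κ s s' L) : ContinuousOn s (Icc 0 L) :=
  fun x hx => (hs.2.2 x hx).1.continuousAt.continuousWithinAt

theorem continuousOn_deriv (hs : IsSinSolution κ s s' L) : ContinuousOn s' (Icc 0 L) :=
  fun x hx => (hs.2.2 x hx).2.continuousAt.continuousWithinAt

theorem hasDerivAt_wronskian (hs : IsSinSolution κ s s' L) (ht : IsSinSolution κ' t t' L)
    {x : ℝ} (hx : x ∈ Icc 0 L) :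
    HasDerivAt (wronskian s s' t t') ((κ x - κ' x) * (s x * t x)) x :=
  (((hs.2.2 x hx).1.mul (ht.2.2 x hx).2).sub
    ((hs.2.2 x hx).2.mul (ht.2.2 x hx).1)).congr_deriv (by ring)

theorem wronskian_nonpos (hs : IsSinSolution κ s s' L) (ht : IsSinSolution κ' t t' L)
    (hge : ∀ x ∈ Icc 0 L, κ x ≤ κ' x) {c : ℝ} (hc : c ≤ L)
    (hst : ∀ x ∈ Icc 0 c, 0 ≤ s x * t x) : ∀ x ∈ Icc 0 c, wronskian s s' t t' x ≤ 0 := by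
  have hsub : Icc 0 c ⊆ Icc 0 L := Icc_subset_Icc_right hc
  have hanti : AntitoneOn (wronskian s s' t t') (Icc 0 c) := by
    refine antitoneOn_of_hasDerivWithinAt_nonpos (convex_Icc 0 c)
      (f' := fun x => (κ x - κ' x) * (s x * t x))
      (((hs.continuousOn.mul ht.continuousOn_deriv).sub
        (hs.continuousOn_deriv.mul ht.continuousOn)).mono hsub) (fun x hx => ?_) (fun x hx => ?_)
    · rw [interior_Icc] at hx
      exact (hs.hasDerivAt_wronskian ht (hsub (Ioo_subset_Icc_self hx))).hasDerivWithinAt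
    · rw [interior_Icc] at hx
      exact mul_nonpos_of_nonpos_of_nonneg
        (sub_nonpos.mpr (hge x (hsub (Ioo_subset_Icc_self hx)))) (hst x (Ioo_subset_Icc_self hx))
  intro x hx
  have h0 : wronskian s s' t t' 0 = 0 := by simp [wronskian, hs.1, ht.1]
  exact h0 ▸ hanti ⟨le_rfl, hx.1.trans hx.2⟩ hx hx.1

theorem le_of_nonneg (hs : IsSinSolution κ s s' L) (ht : IsSinSolution κ' t t' L)
    (hge : ∀ x ∈ Icc 0 L, κ x ≤ κ' x) (htpos : ∀ x ∈ Ioc 0 L, 0 < t x) {c : ℝ} (hc : c ≤ L)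
    (hsc : ∀ x ∈ Icc 0 c, 0 ≤ s x) : ∀ x ∈ Icc 0 c, t x ≤ s x := by
  have hsub : Icc 0 c ⊆ Icc 0 L := Icc_subset_Icc_right hc
  have htpos_c : ∀ x ∈ Ioc 0 c, 0 < t x := fun x hx => htpos x ⟨hx.1, hx.2.trans hc⟩
  have htc : ∀ x ∈ Icc 0 c, 0 ≤ t x := fun x hx =>
    (eq_or_lt_of_le hx.1).elim (fun h => h ▸ ht.1.ge) fun h => (htpos_c x ⟨h, hx.2⟩).le
  have hW := hs.wronskian_nonpos ht hge hc fun x hx => mul_nonneg (hsc x hx) (htc x hx)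
  have hmono : MonotoneOn (fun x => s x / t x) (Ioc 0 c) :=
    monotoneOn_div_of_wronskian_nonpos (hs.continuousOn.mono (Ioc_subset_Icc_self.trans hsub))
      (ht.continuousOn.mono (Ioc_subset_Icc_self.trans hsub))
      (fun x hx => (hs.2.2 x (hsub (Ioo_subset_Icc_self hx))).1)
      (fun x hx => (ht.2.2 x (hsub (Ioo_subset_Icc_self hx))).1) htpos_c
      (fun x hx => hW x (Ioo_subset_Icc_self hx))
  intro x hx
  rcases eq_or_lt_of_le hx.1 with rfl | hx0
  · rw [hs.1, ht.1]
  have h0 : (0 : ℝ) ∈ Icc 0 L := ⟨le_rfl, hx0.le.trans (hx.2.trans hc)⟩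
  have hlim : Tendsto (fun y => s y / t y) (𝓝[>] 0) (𝓝 1) := by
    simpa only [hs.2.1, ht.2.1, div_one] using (tendsto_div_of_hasDerivAt_of_eq_zero (hs.2.2 0 h0).1
      (ht.2.2 0 h0).1 hs.1 ht.1 (by simp [ht.2.1])).mono_left (nhdsGT_le_nhdsNE 0)
  have hratio : 1 ≤ s x / t x := le_of_tendsto hlim <| by
    filter_upwards [Ioc_mem_nhdsGT hx0] with y hy
    exact hmono ⟨hy.1, hy.2.trans hx.2⟩ ⟨hx0, hx.2⟩ hy.2
  exact (one_le_div (htpos_c x ⟨hx0, hx.2⟩)).mp hratio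

theorem nonneg (hs : IsSinSolution κ s s' L) (ht : IsSinSolution κ' t t' L)
    (hge : ∀ x ∈ Icc 0 L, κ x ≤ κ' x) (htpos : ∀ x ∈ Ioc 0 L, 0 < t x) :
    ∀ x ∈ Icc 0 L, 0 ≤ s x := by
  have hclosed : IsClosed ({x | 0 ≤ s x} ∩ Icc 0 L) := by
    rw [inter_comm]
    exact hs.continuousOn.preimage_isClosed_of_isClosed isClosed_Icc isClosed_Ici
  refine fun x hx => hclosed.Icc_subset_of_forall_mem_nhdsGT_of_Icc_subset (by simp [hs.1])
    (fun c hc hsc => ?_) hx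
  have hsd := (hs.2.2 c (Ico_subset_Icc_self hc)).1
  rcases eq_or_lt_of_le hc.1 with rfl | hc0
  · exact (hsd.eventually_pos_nhdsGT hs.1 (hs.2.1 ▸ one_pos)).mono fun _ => le_of_lt
  · have hsc_pos : 0 < s c := (htpos c ⟨hc0, hc.2.le⟩).trans_le
      (hs.le_of_nonneg ht hge htpos hc.2.le hsc c ⟨hc0.le, le_rfl⟩)
    exact nhdsWithin_le_nhds
      ((continuousAt_const.eventually_lt hsd.continuousAt hsc_pos).mono fun _ => le_of_lt)

end IsSinSolution

theorem sturm_comparison_general (L : ℝ)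
    (κ κ' s s' t t' : ℝ → ℝ)
    (hge : ∀ x ∈ Icc (0:ℝ) L, κ x ≤ κ' x)
    (hs : IsSinSolution κ s s' L) (ht : IsSinSolution κ' t t' L)
    (htpos : ∀ x ∈ Ioc (0:ℝ) L, 0 < t x) :
    ∀ x ∈ Icc (0:ℝ) L, t x ≤ s x :=
  hs.le_of_nonneg ht hge htpos le_rfl (hs.nonneg ht hge htpos)

/-- J.C.F. Sturm's comparison theorem: if `κ' ≥ κ` and `𝔰_{κ'} > 0` on `(0, L]`,
then `𝔰_κ ≥ 𝔰_{κ'}` on `[0, L]`. -/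
theorem sturm_comparison (L : ℝ) (hL : 0 < L)
    (κ κ' s s' t t' : ℝ → ℝ)
    (hκ : ContinuousOn κ (Icc 0 L)) (hκ' : ContinuousOn κ' (Icc 0 L))
    (hge : ∀ x ∈ Icc (0:ℝ) L, κ x ≤ κ' x)
    (hs : IsSinSolution κ s s' L) (ht : IsSinSolution κ' t t' L)
    (htpos : ∀ x ∈ Ioc (0:ℝ) L, 0 < t x) :
    ∀ x ∈ Icc (0:ℝ) L, t x ≤ s x :=
  sturm_comparison_general L κ κ' s s' t t' hge hs ht htpos
end

section
/- Let κ : [0,θ] → ℝ be continuous with 𝔰_κ > 0 on (0,θ]. Then for all t ∈ [0,1], σ_κ^{(t)}(θ) = t + ∫₀¹ g(s,t) θ² κ(sθ) σ_κ^{(s)}(θ) ds, where g(s,t) = min(s,t)(1 - max(s,t)) is the Green function of the interval [0,1]. -/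
/-!
For `f x = 𝔰_κ(xθ)` we have `f'' = -h` with `h r = θ² κ(rθ) f r`. Taylor's formula with integral
remainder, `f x = f 0 + x f'(0) - ∫₀ˣ (x - r) h r dr`, written at `x = t` and at `x = 1`, eliminates
the unknown `f'(0)`; since `g(r,t) = t(1 - r) - (t - r)⁺`, what remains is
`f t = t f 1 + ∫₀¹ g(r,t) h r dr`. Dividing by `f 1 = 𝔰_κ(θ) > 0` gives the representation.
-/

open Set

open MeasureTheory

theorem taylor_one_integral_remainder {f f' f'' : ℝ → ℝ} {a b : ℝ}
    (hf : ∀ x ∈ uIcc a b, HasDerivAt f (f' x) x)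
    (hf' : ∀ x ∈ uIcc a b, HasDerivAt f' (f'' x) x)
    (hf'' : IntervalIntegrable f'' volume a b) :
    f b = f a + (b - a) * f' a + ∫ r in a..b, (b - r) * f'' r := by
  have hf'_int : IntervalIntegrable f' volume a b :=
    ContinuousOn.intervalIntegrable fun x hx => (hf' x hx).continuousAt.continuousWithinAt
  have hparts := intervalIntegral.integral_mul_deriv_eq_deriv_mul (u' := fun _ => -1)
    (fun x _ => (hasDerivAt_id x).const_sub b) hf' intervalIntegrable_const hf''
  have hftc := intervalIntegral.integral_eq_sub_of_hasDerivAt hf hf'_int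
  simp only [id_eq, neg_one_mul, intervalIntegral.integral_neg, sub_self, zero_mul] at hparts
  linarith

def unitIntervalGreen (r t : ℝ) : ℝ := min r t * (1 - max r t)

@[fun_prop]
theorem continuous_unitIntervalGreen_left (t : ℝ) : Continuous fun r => unitIntervalGreen r t := by
  unfold unitIntervalGreen
  fun_prop

theorem integral_unitIntervalGreen_mul {h : ℝ → ℝ} (hh : IntervalIntegrable h volume 0 1)
    {t : ℝ} (ht : t ∈ Icc (0:ℝ) 1) :
    ∫ r in (0:ℝ)..1, unitIntervalGreen r t * h r =
      t * (∫ r in (0:ℝ)..1, (1 - r) * h r) - ∫ r in (0:ℝ)..t, (t - r) * h r := by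
  have ht' : t ∈ uIcc (0:ℝ) 1 := by rwa [uIcc_of_le zero_le_one]
  have hh₀ : IntervalIntegrable h volume 0 t := hh.mono_set (uIcc_subset_uIcc_left ht')
  have hh₁ : IntervalIntegrable h volume t 1 := hh.mono_set (uIcc_subset_uIcc_right ht')
  have e₀ : ∫ r in (0:ℝ)..t, unitIntervalGreen r t * h r =
      ∫ r in (0:ℝ)..t, (t * ((1 - r) * h r) - (t - r) * h r) := by
    refine intervalIntegral.integral_congr fun r hr => ?_
    rw [uIcc_of_le ht.1] at hr
    simp only [unitIntervalGreen, min_eq_left hr.2, max_eq_right hr.2]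
    ring
  have e₁ : ∫ r in t..(1:ℝ), unitIntervalGreen r t * h r =
      ∫ r in t..(1:ℝ), t * ((1 - r) * h r) := by
    refine intervalIntegral.integral_congr fun r hr => ?_
    rw [uIcc_of_le ht.2] at hr
    simp only [unitIntervalGreen, min_eq_right hr.1, max_eq_left hr.1]
    ring
  rw [← intervalIntegral.integral_add_adjacent_intervals (hh₀.continuousOn_mul (by fun_prop))
      (hh₁.continuousOn_mul (by fun_prop)), e₀, e₁,
    ← intervalIntegral.integral_add_adjacent_intervals (hh₀.continuousOn_mul (by fun_prop))
      (hh₁.continuousOn_mul (by fun_prop)),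
    intervalIntegral.integral_sub ((hh₀.continuousOn_mul (by fun_prop)).const_mul t)
      (hh₀.continuousOn_mul (by fun_prop)),
    intervalIntegral.integral_const_mul, intervalIntegral.integral_const_mul]
  ring

theorem eq_add_integral_unitIntervalGreen_mul {f f' h : ℝ → ℝ}
    (hf : ∀ x ∈ Icc (0:ℝ) 1, HasDerivAt f (f' x) x)
    (hf' : ∀ x ∈ Icc (0:ℝ) 1, HasDerivAt f' (-h x) x)
    (hh : IntervalIntegrable h volume 0 1) {t : ℝ} (ht : t ∈ Icc (0:ℝ) 1) :
    f t = (1 - t) * f 0 + t * f 1 + ∫ r in (0:ℝ)..1, unitIntervalGreen r t * h r := by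
  have hsub : uIcc 0 t ⊆ Icc (0:ℝ) 1 := uIcc_subset_Icc (left_mem_Icc.2 zero_le_one) ht
  have hsub₁ : uIcc 0 1 ⊆ Icc (0:ℝ) 1 := (uIcc_of_le zero_le_one).subset
  have hh_t : IntervalIntegrable h volume 0 t :=
    hh.mono_set (uIcc_subset_uIcc_left (by rwa [uIcc_of_le zero_le_one]))
  have taylor_t := taylor_one_integral_remainder (fun x hx => hf x (hsub hx))
    (fun x hx => hf' x (hsub hx)) hh_t.neg
  have taylor_1 := taylor_one_integral_remainder (fun x hx => hf x (hsub₁ hx))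
    (fun x hx => hf' x (hsub₁ hx)) hh.neg
  simp only [mul_neg, intervalIntegral.integral_neg] at taylor_t taylor_1
  rw [integral_unitIntervalGreen_mul hh ht]
  linear_combination taylor_t - t * taylor_1

theorem IsSinSolution.hasDerivAt_comp_mul {κ s s' : ℝ → ℝ} {L : ℝ}
    (hs : IsSinSolution κ s s' L) {c x : ℝ} (hx : x * c ∈ Icc 0 L) :
    HasDerivAt (fun y => s (y * c)) (c * s' (x * c)) x ∧
      HasDerivAt (fun y => c * s' (y * c)) (-(c ^ 2 * κ (x * c) * s (x * c))) x := by
  obtain ⟨hds, hds'⟩ := hs.2.2 _ hx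
  constructor
  · rw [mul_comm c]
    exact hds.comp x (hasDerivAt_mul_const c)
  · exact ((hds'.comp x (hasDerivAt_mul_const c)).const_mul c).congr_deriv (by ring)

/-- Green-function representation of the distortion coefficients:
`σ_κ^{(t)}(θ) = t + ∫₀¹ g(s,t) θ² κ(sθ) σ_κ^{(s)}(θ) ds` with
`g(s,t) = min(s,t)(1 - max(s,t))`. -/
theorem distortion_green_representation (θ : ℝ) (hθ : 0 < θ)
    (κ s s' : ℝ → ℝ) (hκ : ContinuousOn κ (Icc 0 θ))
    (hs : IsSinSolution κ s s' θ)
    (hpos : ∀ r ∈ Ioc (0:ℝ) θ, 0 < s r) :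
    ∀ t ∈ Icc (0:ℝ) 1,
      s (t * θ) / s θ =
        t + ∫ r in (0:ℝ)..1, (min r t * (1 - max r t)) * θ ^ 2 * κ (r * θ) * (s (r * θ) / s θ) := by
  intro t ht
  have hmaps : MapsTo (fun x => x * θ) (Icc 0 1) (Icc 0 θ) := fun x hx =>
    ⟨mul_nonneg hx.1 hθ.le, mul_le_of_le_one_left hθ.le hx.2⟩
  have hs_cont : ContinuousOn s (Icc 0 θ) := fun x hx =>
    (hs.2.2 x hx).1.continuousAt.continuousWithinAt
  have hcont : ContinuousOn (fun r => θ ^ 2 * κ (r * θ) * s (r * θ)) (uIcc 0 1) := by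
    rw [uIcc_of_le zero_le_one]
    exact (continuousOn_const.mul (hκ.comp (by fun_prop) hmaps)).mul
      (hs_cont.comp (by fun_prop) hmaps)
  have hrep := eq_add_integral_unitIntervalGreen_mul
    (fun x hx => (hs.hasDerivAt_comp_mul (hmaps hx)).1)
    (fun x hx => (hs.hasDerivAt_comp_mul (hmaps hx)).2) hcont.intervalIntegrable ht
  have hsθ : s θ ≠ 0 := (hpos θ ⟨hθ, le_rfl⟩).ne'
  simp only [zero_mul, hs.1, mul_zero, one_mul, zero_add] at hrep
  rw [hrep, add_div, mul_div_cancel_right₀ _ hsθ, ← intervalIntegral.integral_div]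
  congr 1
  refine intervalIntegral.integral_congr fun r _ => ?_
  simp only [unitIntervalGreen]
  ring
end

section
/- Let κ, κ' : [0,θ] → ℝ be continuous with finite distortion coefficients, and let λ ∈ [0,1]. Then for all t ∈ [0,1]: (σ_κ^{(t)}(θ))^{1-λ} · (σ_{κ'}^{(t)}(θ))^{λ} ≥ σ_{(1-λ)κ + λκ'}^{(t)}(θ). In other words, κ ↦ log σ_κ^{(t)}(θ) is convex in κ. -/
open Set

open Filter Topology

/-!
Put `F = s₀ ^ (1 - l) * s₁ ^ l`. Since `log F` is the weighted mean of `log s₀` and `log s₁`,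
the Riccati equations `u' = -κ - u²` for the logarithmic derivatives of `s₀`, `s₁`, together with
the convexity of `u ↦ u²`, give `F'' ≤ -((1 - l) κ + l κ') F`: `F` is a supersolution of the
equation solved by `s₂`. Sturm comparison does the rest: the Wronskian `F' s₂ - F s₂'` is
nonincreasing and tends to `0` at `0⁺`, so `F / s₂` is nonincreasing on `(0, θ]`, and
`F (t θ) / s₂ (t θ) ≥ F θ / s₂ θ` is the claim.
-/

theorem antitoneOn_Ioc_of_hasDerivAt_nonpos {f f' : ℝ → ℝ} {a b : ℝ}
    (hf : ∀ x ∈ Ioc a b, HasDerivAt f (f' x) x) (hf' : ∀ x ∈ Ioc a b, f' x ≤ 0) :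
    AntitoneOn f (Ioc a b) := by
  refine antitoneOn_of_hasDerivWithinAt_nonpos (f' := f') (convex_Ioc a b)
    (fun x hx => (hf x hx).continuousAt.continuousWithinAt) ?_ ?_ <;> rw [interior_Ioc]
  · exact fun x hx => (hf x (Ioo_subset_Ioc_self hx)).hasDerivWithinAt
  · exact fun x hx => hf' x (Ioo_subset_Ioc_self hx)

theorem AntitoneOn.le_of_tendsto_nhdsGT {g : ℝ → ℝ} {a b c x : ℝ} (hg : AntitoneOn g (Ioc a b))
    (hlim : Tendsto g (𝓝[>] a) (𝓝 c)) (hx : x ∈ Ioc a b) : g x ≤ c :=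
  ge_of_tendsto hlim <| by
    filter_upwards [Ioc_mem_nhdsGT hx.1] with y hy
    exact hg ⟨hy.1, hy.2.trans hx.2⟩ hx hy.2

theorem tendsto_div_nhdsNE_of_hasDerivAt {r s : ℝ → ℝ} {a c d : ℝ} (hr : HasDerivAt r d a)
    (hs : HasDerivAt s c a) (hr0 : r a = 0) (hs0 : s a = 0) (hc : c ≠ 0) :
    Tendsto (fun x => r x / s x) (𝓝[≠] a) (𝓝 (d / c)) := by
  refine ((hasDerivAt_iff_tendsto_slope.mp hr).div
    (hasDerivAt_iff_tendsto_slope.mp hs) hc).congr' ?_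
  filter_upwards [self_mem_nhdsWithin] with x hx
  have hxa : x - a ≠ 0 := sub_ne_zero.mpr hx
  simp only [Pi.div_apply, slope_def_field, hr0, hs0, sub_zero]
  field_simp

theorem HasDerivAt.riccati {s s' : ℝ → ℝ} {k x : ℝ} (hs : HasDerivAt s (s' x) x)
    (hs' : HasDerivAt s' (-(k * s x)) x) (hx : s x ≠ 0) :
    HasDerivAt (fun y => s' y / s y) (-k - (s' x / s x) ^ 2) x :=
  (hs'.div hs hx).congr_deriv (by field_simp)

theorem antitoneOn_div_of_supersolution {k f f' f'' s s' : ℝ → ℝ} {x₀ L p q : ℝ}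
    (hf : ∀ x ∈ Ioc x₀ L, HasDerivAt f (f' x) x)
    (hf' : ∀ x ∈ Ioc x₀ L, HasDerivAt f' (f'' x) x)
    (hsuper : ∀ x ∈ Ioc x₀ L, f'' x ≤ -(k x * f x))
    (hs : ∀ x ∈ Ioc x₀ L, HasDerivAt s (s' x) x)
    (hs' : ∀ x ∈ Ioc x₀ L, HasDerivAt s' (-(k x * s x)) x)
    (hpos : ∀ x ∈ Ioc x₀ L, 0 < s x)
    (hf0 : Tendsto f (𝓝[>] x₀) (𝓝 0)) (hf'0 : Tendsto f' (𝓝[>] x₀) (𝓝 p))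
    (hs0 : Tendsto s (𝓝[>] x₀) (𝓝 0)) (hs'0 : Tendsto s' (𝓝[>] x₀) (𝓝 q)) :
    AntitoneOn (fun x => f x / s x) (Ioc x₀ L) := by
  set W := fun x => f' x * s x - f x * s' x
  have hW : ∀ x ∈ Ioc x₀ L, HasDerivAt W (s x * (f'' x + k x * f x)) x := fun x hx =>
    (((hf' x hx).mul (hs x hx)).sub ((hf x hx).mul (hs' x hx))).congr_deriv (by ring)
  have hW_anti : AntitoneOn W (Ioc x₀ L) := antitoneOn_Ioc_of_hasDerivAt_nonpos hW fun x hx =>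
    mul_nonpos_of_nonneg_of_nonpos (hpos x hx).le (by linarith [hsuper x hx])
  have hW_lim : Tendsto W (𝓝[>] x₀) (𝓝 0) := by
    simpa using (hf'0.mul hs0).sub (hf0.mul hs'0)
  refine antitoneOn_Ioc_of_hasDerivAt_nonpos (f' := fun x => W x / s x ^ 2)
    (fun x hx => (hf x hx).div (hs x hx) (hpos x hx).ne') fun x hx => ?_
  exact div_nonpos_of_nonpos_of_nonneg (hW_anti.le_of_tendsto_nhdsGT hW_lim hx) (sq_nonneg _)

noncomputable def weightedGeomMean (l : ℝ) (a b : ℝ → ℝ) (x : ℝ) : ℝ :=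
  a x ^ (1 - l) * b x ^ l

noncomputable def weightedGeomMeanDeriv (l : ℝ) (a a' b b' : ℝ → ℝ) (x : ℝ) : ℝ :=
  weightedGeomMean l a b x * ((1 - l) * (a' x / a x) + l * (b' x / b x))

section WeightedGeomMean

variable {l x : ℝ} {a a' b b' : ℝ → ℝ}

theorem weightedGeomMean_comm : weightedGeomMean l a b = weightedGeomMean (1 - l) b a := by
  ext x
  rw [weightedGeomMean, weightedGeomMean, sub_sub_cancel, mul_comm]

theorem weightedGeomMean_pos (ha : 0 < a x) (hb : 0 < b x) : 0 < weightedGeomMean l a b x :=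
  mul_pos (Real.rpow_pos_of_pos ha _) (Real.rpow_pos_of_pos hb _)

theorem weightedGeomMean_eq_mul_rpow (ha : 0 < a x) (hb : 0 ≤ b x) :
    weightedGeomMean l a b x = a x * (b x / a x) ^ l := by
  rw [weightedGeomMean, Real.div_rpow hb ha.le, Real.rpow_sub ha, Real.rpow_one]
  field_simp

theorem weightedGeomMean_div_weightedGeomMean {y : ℝ} (hax : 0 ≤ a x) (hbx : 0 ≤ b x)
    (hay : 0 ≤ a y) (hby : 0 ≤ b y) :
    weightedGeomMean l a b x / weightedGeomMean l a b y =
      (a x / a y) ^ (1 - l) * (b x / b y) ^ l := by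
  rw [Real.div_rpow hax hay, Real.div_rpow hbx hby, weightedGeomMean, weightedGeomMean,
    mul_div_mul_comm]

theorem weightedGeomMeanDeriv_eq (ha : 0 < a x) (hb : 0 < b x) :
    weightedGeomMeanDeriv l a a' b b' x =
      (1 - l) * ((b x / a x) ^ l * a' x) + l * ((a x / b x) ^ (1 - l) * b' x) := by
  have hFa : weightedGeomMean l a b x / a x = (b x / a x) ^ l := by
    rw [weightedGeomMean_eq_mul_rpow ha hb.le]
    field_simp
  have hFb : weightedGeomMean l a b x / b x = (a x / b x) ^ (1 - l) := by
    rw [weightedGeomMean_comm, weightedGeomMean_eq_mul_rpow hb ha.le]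
    field_simp
  rw [weightedGeomMeanDeriv, ← hFa, ← hFb]
  ring

theorem hasDerivAt_weightedGeomMean (ha : HasDerivAt a (a' x) x) (hb : HasDerivAt b (b' x) x)
    (hax : 0 < a x) (hbx : 0 < b x) :
    HasDerivAt (weightedGeomMean l a b) (weightedGeomMeanDeriv l a a' b b' x) x := by
  refine ((ha.rpow_const (Or.inl hax.ne')).mul (hb.rpow_const (Or.inl hbx.ne'))).congr_deriv ?_
  rw [weightedGeomMeanDeriv, weightedGeomMean, Real.rpow_sub hax, Real.rpow_sub hbx,
    Real.rpow_one, Real.rpow_one]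
  field_simp

/-- The defect `(1 - l) l (u₀ - u₁)²` is the gap in Jensen's inequality for `u ↦ u²`. -/
theorem hasDerivAt_weightedGeomMeanDeriv {ka kb : ℝ}
    (ha : HasDerivAt a (a' x) x) (ha' : HasDerivAt a' (-(ka * a x)) x)
    (hb : HasDerivAt b (b' x) x) (hb' : HasDerivAt b' (-(kb * b x)) x)
    (hax : 0 < a x) (hbx : 0 < b x) :
    HasDerivAt (weightedGeomMeanDeriv l a a' b b')
      (weightedGeomMean l a b x *
        (-((1 - l) * ka + l * kb) - (1 - l) * l * (a' x / a x - b' x / b x) ^ 2)) x := by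
  refine ((hasDerivAt_weightedGeomMean ha hb hax hbx).mul
    (((ha.riccati ha' hax.ne').const_mul (1 - l)).add
      ((hb.riccati hb' hbx.ne').const_mul l))).congr_deriv ?_
  simp only [weightedGeomMeanDeriv, Pi.add_apply]
  ring

variable {x₀ c : ℝ}

theorem tendsto_div_nhdsGT_one (ha : HasDerivAt a c x₀) (hb : HasDerivAt b c x₀)
    (ha0 : a x₀ = 0) (hb0 : b x₀ = 0) (hc : c ≠ 0) :
    Tendsto (fun x => b x / a x) (𝓝[>] x₀) (𝓝 1) :=
  div_self hc ▸ (tendsto_div_nhdsNE_of_hasDerivAt hb ha hb0 ha0 hc).mono_left (nhdsGT_le_nhdsNE x₀)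

theorem tendsto_weightedGeomMean_nhdsGT (ha : HasDerivAt a c x₀) (hb : HasDerivAt b c x₀)
    (ha0 : a x₀ = 0) (hb0 : b x₀ = 0) (hc : c ≠ 0) (hpos : ∀ᶠ x in 𝓝[>] x₀, 0 < a x ∧ 0 < b x) :
    Tendsto (weightedGeomMean l a b) (𝓝[>] x₀) (𝓝 0) := by
  have ha_lim : Tendsto a (𝓝[>] x₀) (𝓝 0) := ha0 ▸ ha.continuousAt.continuousWithinAt.tendsto
  have hlim := ha_lim.mul ((tendsto_div_nhdsGT_one ha hb ha0 hb0 hc).rpow_const (p := l)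
    (Or.inl one_ne_zero))
  rw [zero_mul] at hlim
  refine hlim.congr' ?_
  filter_upwards [hpos] with x hx
  exact (weightedGeomMean_eq_mul_rpow hx.1 hx.2.le).symm

theorem tendsto_weightedGeomMeanDeriv_nhdsGT (ha : HasDerivAt a c x₀) (hb : HasDerivAt b c x₀)
    (ha0 : a x₀ = 0) (hb0 : b x₀ = 0) (hc : c ≠ 0) (hpos : ∀ᶠ x in 𝓝[>] x₀, 0 < a x ∧ 0 < b x)
    (ha' : Tendsto a' (𝓝[>] x₀) (𝓝 c)) (hb' : Tendsto b' (𝓝[>] x₀) (𝓝 c)) :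
    Tendsto (weightedGeomMeanDeriv l a a' b b') (𝓝[>] x₀) (𝓝 c) := by
  have hba := (tendsto_div_nhdsGT_one ha hb ha0 hb0 hc).rpow_const (p := l) (Or.inl one_ne_zero)
  have hab := (tendsto_div_nhdsGT_one hb ha hb0 ha0 hc).rpow_const (p := 1 - l)
    (Or.inl one_ne_zero)
  have hlim := ((hba.mul ha').const_mul (1 - l)).add ((hab.mul hb').const_mul l)
  rw [Real.one_rpow, Real.one_rpow, one_mul, ← add_mul, sub_add_cancel, one_mul] at hlim
  refine hlim.congr' ?_
  filter_upwards [hpos] with x hx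
  exact (weightedGeomMeanDeriv_eq hx.1 hx.2).symm

end WeightedGeomMean

namespace IsSinSolution

variable {κ s s' : ℝ → ℝ} {L : ℝ}

theorem hasDerivAt_zero (h : IsSinSolution κ s s' L) (hL : 0 ≤ L) : HasDerivAt s 1 0 :=
  h.2.1 ▸ (h.2.2 0 ⟨le_rfl, hL⟩).1

theorem tendsto_nhdsGT (h : IsSinSolution κ s s' L) (hL : 0 ≤ L) :
    Tendsto s (𝓝[>] 0) (𝓝 0) := by
  simpa only [h.1] using (h.2.2 0 ⟨le_rfl, hL⟩).1.continuousAt.continuousWithinAt.tendsto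

theorem tendsto_deriv_nhdsGT (h : IsSinSolution κ s s' L) (hL : 0 ≤ L) :
    Tendsto s' (𝓝[>] 0) (𝓝 1) := by
  simpa only [h.2.1] using (h.2.2 0 ⟨le_rfl, hL⟩).2.continuousAt.continuousWithinAt.tendsto

end IsSinSolution

theorem antitoneOn_weightedGeomMean_div {θ l : ℝ} {κ κ' s₀ s₀' s₁ s₁' s₂ s₂' : ℝ → ℝ}
    (hθ : 0 < θ) (hl : l ∈ Icc (0:ℝ) 1)
    (hs₀ : IsSinSolution κ s₀ s₀' θ) (hs₁ : IsSinSolution κ' s₁ s₁' θ)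
    (hs₂ : IsSinSolution (fun x => (1 - l) * κ x + l * κ' x) s₂ s₂' θ)
    (hpos₀ : ∀ x ∈ Ioc 0 θ, 0 < s₀ x) (hpos₁ : ∀ x ∈ Ioc 0 θ, 0 < s₁ x)
    (hpos₂ : ∀ x ∈ Ioc 0 θ, 0 < s₂ x) :
    AntitoneOn (fun x => weightedGeomMean l s₀ s₁ x / s₂ x) (Ioc 0 θ) := by
  have hd₀ x (hx : x ∈ Ioc 0 θ) := hs₀.2.2 x (Ioc_subset_Icc_self hx)
  have hd₁ x (hx : x ∈ Ioc 0 θ) := hs₁.2.2 x (Ioc_subset_Icc_self hx)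
  have hd₂ x (hx : x ∈ Ioc 0 θ) := hs₂.2.2 x (Ioc_subset_Icc_self hx)
  have hpos : ∀ᶠ x in 𝓝[>] 0, 0 < s₀ x ∧ 0 < s₁ x := by
    filter_upwards [Ioc_mem_nhdsGT hθ] with x hx using ⟨hpos₀ x hx, hpos₁ x hx⟩
  refine antitoneOn_div_of_supersolution
    (fun x hx => hasDerivAt_weightedGeomMean (hd₀ x hx).1 (hd₁ x hx).1 (hpos₀ x hx) (hpos₁ x hx))
    (fun x hx => hasDerivAt_weightedGeomMeanDeriv (hd₀ x hx).1 (hd₀ x hx).2 (hd₁ x hx).1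
      (hd₁ x hx).2 (hpos₀ x hx) (hpos₁ x hx))
    (fun x hx => ?_) (fun x hx => (hd₂ x hx).1) (fun x hx => (hd₂ x hx).2) hpos₂
    (tendsto_weightedGeomMean_nhdsGT (hs₀.hasDerivAt_zero hθ.le) (hs₁.hasDerivAt_zero hθ.le)
      hs₀.1 hs₁.1 one_ne_zero hpos)
    (tendsto_weightedGeomMeanDeriv_nhdsGT (hs₀.hasDerivAt_zero hθ.le) (hs₁.hasDerivAt_zero hθ.le)
      hs₀.1 hs₁.1 one_ne_zero hpos (hs₀.tendsto_deriv_nhdsGT hθ.le)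
      (hs₁.tendsto_deriv_nhdsGT hθ.le))
    (hs₂.tendsto_nhdsGT hθ.le) (hs₂.tendsto_deriv_nhdsGT hθ.le)
  have hF := weightedGeomMean_pos (l := l) (hpos₀ x hx) (hpos₁ x hx)
  nlinarith [mul_nonneg (mul_nonneg hF.le (mul_nonneg (sub_nonneg.2 hl.2) hl.1))
    (sq_nonneg (s₀' x / s₀ x - s₁' x / s₁ x))]

theorem distortion_log_convex_general (θ : ℝ) (hθ : 0 < θ) (l : ℝ) (hl : l ∈ Icc (0:ℝ) 1)
    (κ κ' s₀ s₀' s₁ s₁' s₂ s₂' : ℝ → ℝ)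
    (hs₀ : IsSinSolution κ s₀ s₀' θ)
    (hs₁ : IsSinSolution κ' s₁ s₁' θ)
    (hs₂ : IsSinSolution (fun x => (1 - l) * κ x + l * κ' x) s₂ s₂' θ)
    (hpos₀ : ∀ r ∈ Ioc (0:ℝ) θ, 0 < s₀ r)
    (hpos₁ : ∀ r ∈ Ioc (0:ℝ) θ, 0 < s₁ r)
    (hpos₂ : ∀ r ∈ Ioc (0:ℝ) θ, 0 < s₂ r) :
    ∀ t ∈ Icc (0:ℝ) 1,
      s₂ (t * θ) / s₂ θ ≤ (s₀ (t * θ) / s₀ θ) ^ (1 - l) * (s₁ (t * θ) / s₁ θ) ^ l := by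
  intro t ht
  rcases ht.1.eq_or_lt with rfl | ht0
  · simp only [zero_mul, hs₀.1, hs₁.1, hs₂.1, zero_div]
    exact mul_nonneg (Real.rpow_nonneg le_rfl _) (Real.rpow_nonneg le_rfl _)
  have hx : t * θ ∈ Ioc 0 θ := ⟨mul_pos ht0 hθ, mul_le_of_le_one_left hθ.le ht.2⟩
  have hθ' : θ ∈ Ioc 0 θ := ⟨hθ, le_rfl⟩
  have hmono := antitoneOn_weightedGeomMean_div hθ hl hs₀ hs₁ hs₂ hpos₀ hpos₁ hpos₂ hx hθ' hx.2
  rw [div_le_div_iff₀ (hpos₂ _ hθ') (hpos₂ _ hx)] at hmono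
  rw [← weightedGeomMean_div_weightedGeomMean (hpos₀ _ hx).le (hpos₁ _ hx).le
    (hpos₀ _ hθ').le (hpos₁ _ hθ').le, div_le_div_iff₀ (hpos₂ _ hθ')
    (weightedGeomMean_pos (hpos₀ _ hθ') (hpos₁ _ hθ'))]
  linarith

/-- Log-convexity of the distortion coefficients in `κ`:
`(σ_κ^{(t)}(θ))^{1-λ}·(σ_{κ'}^{(t)}(θ))^{λ} ≥ σ_{(1-λ)κ+λκ'}^{(t)}(θ)`. -/
theorem distortion_log_convex (θ : ℝ) (hθ : 0 < θ) (l : ℝ) (hl : l ∈ Icc (0:ℝ) 1)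
    (κ κ' s₀ s₀' s₁ s₁' s₂ s₂' : ℝ → ℝ)
    (hκ : ContinuousOn κ (Icc 0 θ)) (hκ' : ContinuousOn κ' (Icc 0 θ))
    (hs₀ : IsSinSolution κ s₀ s₀' θ)
    (hs₁ : IsSinSolution κ' s₁ s₁' θ)
    (hs₂ : IsSinSolution (fun x => (1 - l) * κ x + l * κ' x) s₂ s₂' θ)
    (hpos₀ : ∀ r ∈ Ioc (0:ℝ) θ, 0 < s₀ r)
    (hpos₁ : ∀ r ∈ Ioc (0:ℝ) θ, 0 < s₁ r)
    (hpos₂ : ∀ r ∈ Ioc (0:ℝ) θ, 0 < s₂ r) :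
    ∀ t ∈ Icc (0:ℝ) 1,
      s₂ (t * θ) / s₂ θ ≤ (s₀ (t * θ) / s₀ θ) ^ (1 - l) * (s₁ (t * θ) / s₁ θ) ^ l :=
  distortion_log_convex_general θ hθ l hl κ κ' s₀ s₀' s₁ s₁' s₂ s₂' hs₀ hs₁ hs₂ hpos₀ hpos₁ hpos₂
end

section
/- Let κ : [0,θ] → ℝ be continuous with 𝔰_κ > 0 on (0,θ]. Then the right derivative at t = 0 of σ_κ^{(t)}(θ) satisfies (d/dt)|_{t=0} σ_κ^{(t)}(θ) = 1 + ∫₀¹ (1-s) θ² κ(sθ) σ_κ^{(s)}(θ) ds. -/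
open Set

/-! Since `s(0) = 0` and `s'(0) = 1`, Taylor's formula with integral remainder gives
`s(θ) = θ - ∫₀^θ (θ - x) κ(x) s(x) dx`; substituting `x = rθ` turns the integral of the statement
into `(θ - s(θ)) / s(θ)`, so the right-hand side is `θ / s(θ) = θ s'(0) / s(θ)`, the derivative
of `t ↦ s(tθ) / s(θ)` at `0`. -/

/-- Taylor's formula of order one with integral remainder. -/
theorem integral_sub_mul_second_deriv_eq {f f' f'' : ℝ → ℝ} {a b : ℝ}
    (hf : ∀ x ∈ uIcc a b, HasDerivAt f (f' x) x)
    (hf' : ∀ x ∈ uIcc a b, HasDerivAt f' (f'' x) x)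
    (hint : IntervalIntegrable f'' MeasureTheory.volume a b) :
    ∫ x in a..b, (b - x) * f'' x = f b - f a - (b - a) * f' a := by
  have hderiv : ∀ x ∈ uIcc a b,
      HasDerivAt (fun x => (b - x) * f' x + f x) ((b - x) * f'' x) x := by
    intro x hx
    have h : HasDerivAt (fun x => (b - x) * f' x + f x)
        ((0 - 1) * f' x + (b - x) * f'' x + f' x) x :=
      (((hasDerivAt_const x b).sub (hasDerivAt_id x)).mul (hf' x hx)).add (hf x hx)
    convert h using 1
    ring
  have hint' : IntervalIntegrable (fun x => (b - x) * f'' x) MeasureTheory.volume a b :=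
    hint.continuousOn_mul (by fun_prop)
  rw [intervalIntegral.integral_eq_sub_of_hasDerivAt hderiv hint']
  ring

theorem integral_one_sub_mul_sq_mul_comp_mul_right (g : ℝ → ℝ) {θ : ℝ} (hθ : θ ≠ 0) :
    ∫ r in (0:ℝ)..1, (1 - r) * θ ^ 2 * g (r * θ) = ∫ x in (0:ℝ)..θ, (θ - x) * g x := by
  have hcomp : ∀ r : ℝ, (1 - r) * θ ^ 2 * g (r * θ) = θ * ((θ - r * θ) * g (r * θ)) := by
    intro r
    ring
  simp_rw [hcomp]
  rw [intervalIntegral.integral_const_mul,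
    intervalIntegral.integral_comp_mul_right (fun x => (θ - x) * g x) hθ]
  simp only [zero_mul, one_mul, smul_eq_mul]
  field_simp

namespace IsSinSolution

variable {κ s s' : ℝ → ℝ} {L : ℝ}

theorem integral_sub_mul_kappa_mul (hs : IsSinSolution κ s s' L) (hL : 0 ≤ L)
    (hκ : ContinuousOn κ (Icc 0 L)) :
    ∫ x in (0:ℝ)..L, (L - x) * (κ x * s x) = L - s L := by
  obtain ⟨hs0, hs'0, hderiv⟩ := hs
  have hscont : ContinuousOn s (Icc 0 L) := fun x hx =>
    (hderiv x hx).1.continuousAt.continuousWithinAt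
  have hint : IntervalIntegrable (fun x => -(κ x * s x)) MeasureTheory.volume 0 L :=
    ((hκ.mul hscont).neg).intervalIntegrable_of_Icc hL
  have htaylor := integral_sub_mul_second_deriv_eq
    (fun x hx => (hderiv x (uIcc_of_le hL ▸ hx)).1)
    (fun x hx => (hderiv x (uIcc_of_le hL ▸ hx)).2) hint
  simp only [mul_neg, intervalIntegral.integral_neg, hs0, hs'0] at htaylor
  linarith

theorem hasDerivAt_comp_mul_div (hs : IsSinSolution κ s s' L) (hL : 0 ≤ L) (θ c : ℝ) :
    HasDerivAt (fun t : ℝ => s (t * θ) / c) (θ / c) 0 := by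
  have hs0 : HasDerivAt s 1 (0 * θ) := by
    simpa [hs.2.1] using (hs.2.2 0 ⟨le_rfl, hL⟩).1
  simpa using (hs0.comp 0 ((hasDerivAt_id 0).mul_const θ)).div_const c

end IsSinSolution

/-- The right derivative at `t = 0` of `t ↦ σ_κ^{(t)}(θ)` equals
`1 + ∫₀¹ (1-s) θ² κ(sθ) σ_κ^{(s)}(θ) ds`. -/
theorem distortion_right_deriv_at_zero (θ : ℝ) (hθ : 0 < θ)
    (κ s s' : ℝ → ℝ) (hκ : ContinuousOn κ (Icc 0 θ))
    (hs : IsSinSolution κ s s' θ)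
    (hpos : ∀ r ∈ Ioc (0:ℝ) θ, 0 < s r) :
    HasDerivWithinAt (fun t : ℝ => s (t * θ) / s θ)
      (1 + ∫ r in (0:ℝ)..1, (1 - r) * θ ^ 2 * κ (r * θ) * (s (r * θ) / s θ))
      (Ici 0) 0 := by
  have hsθ : s θ ≠ 0 := (hpos θ ⟨hθ, le_rfl⟩).ne'
  have hI : ∫ r in (0:ℝ)..1, (1 - r) * θ ^ 2 * κ (r * θ) * (s (r * θ) / s θ)
      = (θ - s θ) / s θ := by
    simp_rw [mul_assoc _ (κ _), integral_one_sub_mul_sq_mul_comp_mul_right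
      (fun x => κ x * (s x / s θ)) hθ.ne', ← mul_div_assoc, intervalIntegral.integral_div,
      hs.integral_sub_mul_kappa_mul hθ.le hκ]
  have hval : 1 + (θ - s θ) / s θ = θ / s θ := by
    field_simp
    ring
  rw [hI, hval]
  exact (hs.hasDerivAt_comp_mul_div hθ.le θ (s θ)).hasDerivWithinAt
end

section
/- Let κ : [0,L] → ℝ be continuous. For fixed t ∈ [0,1], the map h ↦ σ_κ^{(t)}(h) is twice differentiable at h = 0 with Taylor expansion σ_κ^{(t)}(h) = t[1 + (1/6)(1-t²)κ(0)h²] + o(h²). -/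
open Set Asymptotics

open Filter Topology

/-!
Write `s x = x - κ(0) x³/6 + R x`. The remainder satisfies `R 0 = R' 0 = 0` and
`R'' x = -κ x (s x - x) + (κ 0 - κ x) x = o(x)` by continuity of `κ` at `0`, and integrating a
little-o bound twice with the mean value inequality gives `R x = o(x³)`. Substituting into
`s(th) - t(1 + ch²) s(h)` with `c = (1 - t²) κ(0)/6`, the cubic terms cancel, leaving `o(h³)`;
since `s h ~ h`, dividing by `s h` gives `o(h²)`.
-/

theorem isLittleO_pow_succ_of_hasDerivWithinAt {E : Type*} [NormedAddCommGroup E]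
    [NormedSpace ℝ E] {f f' : ℝ → E} {n : ℕ} (hf0 : f 0 = 0)
    (hf : ∀ᶠ x in 𝓝[≥] 0, HasDerivWithinAt f (f' x) (Ici 0) x)
    (hf' : f' =o[𝓝[≥] 0] fun x => x ^ n) : f =o[𝓝[≥] 0] fun x => x ^ (n + 1) := by
  refine isLittleO_iff.2 fun ε hε => ?_
  obtain ⟨δ, hδ, hsub⟩ := mem_nhdsGE_iff_exists_Ico_subset.1 ((hf'.def hε).and hf)
  filter_upwards [Ico_mem_nhdsGE hδ] with x ⟨hx0, hxδ⟩
  have hIcc : Icc 0 x ⊆ Ico 0 δ := Icc_subset_Ico_right hxδ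
  have hbound :=
    (convex_Icc 0 x).norm_image_sub_le_of_norm_hasDerivWithin_le (C := ε * ‖x ^ n‖)
    (fun u hu => (hsub (hIcc hu)).2.mono Icc_subset_Ici_self)
    (fun u hu => (hsub (hIcc hu)).1.trans <| by
      gcongr
      simp only [norm_pow, Real.norm_eq_abs, abs_of_nonneg hu.1, abs_of_nonneg hx0]
      exact pow_le_pow_left₀ hu.1 hu.2 n)
    (left_mem_Icc.2 hx0) (right_mem_Icc.2 hx0)
  calc ‖f x‖ ≤ ε * ‖x ^ n‖ * ‖x - 0‖ := by simpa [hf0] using hbound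
    _ = ε * ‖x ^ (n + 1)‖ := by rw [sub_zero, mul_assoc, ← norm_mul, pow_succ]

theorem Asymptotics.IsLittleO.comp_const_mul_nhdsGE {E : Type*} [Norm E] {f : ℝ → E} {n : ℕ}
    {t : ℝ} (ht : 0 ≤ t) (hf : f =o[𝓝[≥] 0] fun x => x ^ n) :
    (fun x => f (t * x)) =o[𝓝[≥] 0] fun x => x ^ n := by
  have hmul : Tendsto (t * ·) (𝓝[≥] 0) (𝓝[≥] 0) := tendsto_nhdsWithin_iff.2
    ⟨((continuous_const_mul t).tendsto' 0 0 (mul_zero t)).mono_left nhdsWithin_le_nhds,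
      eventually_mem_nhdsWithin.mono fun x (hx : 0 ≤ x) => mul_nonneg ht hx⟩
  refine (hf.comp_tendsto hmul).trans_isBigO ?_
  exact (isBigO_const_mul_self (t ^ n) _ _).congr_left fun x => by simp [mul_pow]

namespace IsSinSolution

variable {κ s s' : ℝ → ℝ} {L : ℝ}

theorem isEquivalent_id_nhds_zero (hL : 0 ≤ L) (hs : IsSinSolution κ s s' L) :
    s ~[𝓝 0] fun x => x := by
  have h := (hs.2.2 0 ⟨le_rfl, hL⟩).1
  rw [hasDerivAt_iff_isLittleO] at h
  simpa [IsEquivalent, hs.1, hs.2.1, Pi.sub_def] using h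

theorem isLittleO_sub_taylor (hL : 0 < L) (hs : IsSinSolution κ s s' L)
    (hκ : ContinuousWithinAt κ (Icc 0 L) 0) :
    (fun x => s x - (x - κ 0 * x ^ 3 / 6)) =o[𝓝[≥] 0] fun x => x ^ 3 := by
  have hIcc : ∀ᶠ x in 𝓝[≥] (0:ℝ), x ∈ Icc 0 L := Icc_mem_nhdsGE hL
  have hκ' : Tendsto (fun x => κ 0 - κ x) (𝓝[≥] 0) (𝓝 0) := by
    simpa [← nhdsWithin_Icc_eq_nhdsGE hL] using (tendsto_const_nhds (x := κ 0)).sub hκ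
  have hκ_bdd : κ =O[𝓝[≥] 0] fun _ => (1 : ℝ) :=
    (hκ.mono_left (nhdsWithin_Icc_eq_nhdsGE hL).ge).isBigO_one ℝ
  have hs_sub : (fun x => s x - x) =o[𝓝[≥] 0] fun x => x :=
    ((hs.isEquivalent_id_nhds_zero hL.le).mono nhdsWithin_le_nhds).isLittleO
  have h₂ : (fun x => -(κ x * s x) + κ 0 * x) =o[𝓝[≥] 0] fun x => x ^ 1 := by
    have := (hκ_bdd.mul_isLittleO hs_sub).neg_left.add
      (((isLittleO_one_iff ℝ).2 hκ').mul_isBigO (isBigO_refl (fun x : ℝ => x) _))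
    simpa [pow_one] using this.congr_left fun x => by ring
  have h₁ : (fun x => s' x - (1 - κ 0 * x ^ 2 / 2)) =o[𝓝[≥] 0] fun x => x ^ 2 := by
    refine isLittleO_pow_succ_of_hasDerivWithinAt (by simp [hs.2.1]) ?_ h₂
    filter_upwards [hIcc] with x hx
    have hpoly : HasDerivAt (fun x => 1 - κ 0 * x ^ 2 / 2) (-(κ 0 * x)) x :=
      ((((hasDerivAt_pow 2 x).const_mul _).div_const 2).const_sub 1).congr_deriv (by norm_num; ring)
    exact ((hs.2.2 x hx).2.sub hpoly).hasDerivWithinAt.congr_deriv (by ring)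
  refine isLittleO_pow_succ_of_hasDerivWithinAt (by simp [hs.1]) ?_ h₁
  filter_upwards [hIcc] with x hx
  have hpoly : HasDerivAt (fun x => x - κ 0 * x ^ 3 / 6) (1 - κ 0 * x ^ 2 / 2) x :=
    ((hasDerivAt_id x).sub (((hasDerivAt_pow 3 x).const_mul _).div_const 6)).congr_deriv
      (by norm_num; ring)
  exact ((hs.2.2 x hx).1.sub hpoly).hasDerivWithinAt

theorem isLittleO_distortion_numerator (hL : 0 < L) (hs : IsSinSolution κ s s' L)
    (hκ : ContinuousWithinAt κ (Icc 0 L) 0) {t : ℝ} (ht : 0 ≤ t) :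
    (fun h => s (t * h) - t * (1 + 1 / 6 * (1 - t ^ 2) * κ 0 * h ^ 2) * s h)
      =o[𝓝[≥] 0] fun h => h ^ 3 := by
  have hR := hs.isLittleO_sub_taylor hL hκ
  have hquad := ((isBigO_refl (fun h : ℝ => h ^ 2) (𝓝[≥] 0)).mul_isLittleO
    ((hs.isEquivalent_id_nhds_zero hL.le).mono nhdsWithin_le_nhds).isLittleO).const_mul_left
      (t * (1 / 6 * (1 - t ^ 2) * κ 0))
  -- with `R x = s x - (x - κ 0 x³ / 6)` and `c = (1 - t²) κ 0 / 6` the cubic terms cancel: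
  -- `s (th) - t (1 + c h²) s h = R (th) - t R h - t c h² (s h - h)`
  refine (((hR.comp_const_mul_nhdsGE ht).sub (hR.const_mul_left t)).sub
    (hquad.trans_isBigO ?_)).congr_left fun h => ?_
  · exact (isBigO_refl _ _).congr_right fun h => by ring
  · simp only [Pi.sub_apply]
    ring

end IsSinSolution

/-- Taylor expansion of the distortion coefficient in the length variable:
`σ_κ^{(t)}(h) = t[1 + (1/6)(1-t²)κ(0)h²] + o(h²)` as `h → 0⁺`. -/
theorem distortion_taylor (L : ℝ) (hL : 0 < L)
    (κ s s' : ℝ → ℝ) (hκ : ContinuousOn κ (Icc 0 L))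
    (hs : IsSinSolution κ s s' L)
    (t : ℝ) (ht : t ∈ Icc (0:ℝ) 1) :
    (fun h : ℝ => s (t * h) / s h - t * (1 + 1 / 6 * (1 - t ^ 2) * κ 0 * h ^ 2))
      =o[nhdsWithin 0 (Ioi 0)] (fun h : ℝ => h ^ 2) := by
  have hequiv : s ~[𝓝[>] 0] fun x => x :=
    (hs.isEquivalent_id_nhds_zero hL.le).mono nhdsWithin_le_nhds
  have hN := (hs.isLittleO_distortion_numerator hL (hκ 0 ⟨le_rfl, hL.le⟩) ht.1).mono
    (nhdsWithin_mono _ Ioi_subset_Ici_self)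
  have hpos : ∀ᶠ h in 𝓝[>] (0:ℝ), 0 < h := self_mem_nhdsWithin
  refine (hN.mul_isBigO hequiv.inv.isBigO).congr' ?_ ?_
  · filter_upwards [hequiv.eventually_pos hpos] with h hsh
    simp only [Pi.inv_apply]
    field_simp
  · filter_upwards [hpos] with h hh
    simp only [Pi.inv_apply]
    field_simp
end
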